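/- arXiv:2205.12378 — 2 statements merged into one kernel-verified Lean document; each statement's English description precedes it below -/
import Mathlib

section
/- Let V : ℝ^n → ℝ be continuous, nonnegative, and radially unbounded, and let {x_k} be an adapted stochastic process such that for some fixed integer T ≥ 1, E[V(x_{k+T}) | F_k] − V(x_k) ≤ −φ(x_k) for all k, where φ : ℝ^n → ℝ is continuous with φ(x) ≥ 0 for all x. Then for any deterministic initial condition x_0, φ(x_k) → 0 almost surely, i.e. x_k converges to the set D = {x : φ(x) = 0} with probability one. -/
open MeasureTheory Filter

theorem stmt_2 {Ω : Type*} {m0 : MeasurableSpace Ω} (μ : Measure Ω) [IsProbabilityMeasure μ]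
    (ℱ : Filtration ℕ m0) {n : ℕ} (x : ℕ → Ω → (Fin n → ℝ))
    (hAdapted : Adapted ℱ x)
    (hx0 : ∃ c : Fin n → ℝ, ∀ ω, x 0 ω = c)
    (V φ : (Fin n → ℝ) → ℝ)
    (hVcont : Continuous V) (hVnn : ∀ y, 0 ≤ V y)
    (hVunbdd : Tendsto V (cocompact _) atTop)
    (hφcont : Continuous φ) (hφnn : ∀ y, 0 ≤ φ y)
    (hint : ∀ k, Integrable (fun ω => V (x k ω)) μ)
    (T : ℕ) (hT : 1 ≤ T)
    (hdrift : ∀ k, μ[fun ω => V (x (k + T) ω) | ℱ k]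
        ≤ᵐ[μ] fun ω => V (x k ω) - φ (x k ω)) :
    ∀ᵐ ω ∂μ, Tendsto (fun k => φ (x k ω)) atTop (nhds 0) := by
  -- Measurability of φ ∘ x k
  have hxm : ∀ k, Measurable (fun ω => φ (x k ω)) := fun k =>
    hφcont.measurable.comp ((hAdapted k).mono (ℱ.le k) le_rfl)
  -- Integrability of φ ∘ x k
  have hφint : ∀ k, Integrable (fun ω => φ (x k ω)) μ := by
    intro k
    have hg : Integrable
        (fun ω => V (x k ω) - (μ[fun ω => V (x (k + T) ω) | ℱ k]) ω) μ :=
      (hint k).sub integrable_condExp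
    refine hg.mono (hxm k).aestronglyMeasurable ?_
    filter_upwards [hdrift k] with ω hω
    have h1 : 0 ≤ φ (x k ω) := hφnn _
    have h2 : φ (x k ω) ≤ V (x k ω) - (μ[fun ω => V (x (k + T) ω) | ℱ k]) ω := by
      linarith [hω]
    rw [Real.norm_eq_abs, abs_of_nonneg h1]
    exact h2.trans (le_abs_self _)
  set a : ℕ → ℝ := fun k => ∫ ω, φ (x k ω) ∂μ with ha
  set b : ℕ → ℝ := fun k => ∫ ω, V (x k ω) ∂μ with hb
  have hann : ∀ k, 0 ≤ a k := fun k => integral_nonneg fun ω => hφnn _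
  have hbnn : ∀ k, 0 ≤ b k := fun k => integral_nonneg fun ω => hVnn _
  -- Key inequality
  have key : ∀ k, a k ≤ b k - b (k + T) := by
    intro k
    have h1 : ∫ ω, V (x (k + T) ω) ∂μ
        = ∫ ω, (μ[fun ω => V (x (k + T) ω) | ℱ k]) ω ∂μ :=
      (integral_condExp (ℱ.le k)).symm
    have h2 : ∫ ω, (μ[fun ω => V (x (k + T) ω) | ℱ k]) ω ∂μ
        ≤ ∫ ω, (V (x k ω) - φ (x k ω)) ∂μ :=
      integral_mono_ae integrable_condExp ((hint k).sub (hφint k)) (hdrift k)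
    rw [integral_sub (hint k) (hφint k)] at h2
    simp only [ha, hb]
    linarith [h1 ▸ h2]
  -- Summability of a
  have hsum : Summable a := by
    apply summable_of_sum_range_le hann (c := ∑ r ∈ Finset.range T, b r)
    intro N
    have h1 : ∑ k ∈ Finset.range N, a k ≤ ∑ k ∈ Finset.range N, (b k - b (k + T)) :=
      Finset.sum_le_sum fun k _ => key k
    rw [Finset.sum_sub_distrib] at h1
    have h2 : ∑ k ∈ Finset.range N, b (k + T)
        = ∑ k ∈ Finset.Ico T (N + T), b k := by
      rw [Finset.sum_Ico_eq_sum_range]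
      simp [Nat.add_sub_cancel, add_comm]
    have h3 : ∑ k ∈ Finset.range N, b k ≤ ∑ k ∈ Finset.range (N + T), b k :=
      Finset.sum_le_sum_of_subset_of_nonneg
        (Finset.range_subset_range.2 (Nat.le_add_right _ _)) (fun i _ _ => hbnn i)
    have h4 : ∑ k ∈ Finset.range (N + T), b k
        = ∑ k ∈ Finset.range T, b k + ∑ k ∈ Finset.Ico T (N + T), b k := by
      rw [Finset.range_eq_Ico, Finset.range_eq_Ico]
      exact (Finset.sum_Ico_consecutive _ (Nat.zero_le T) (Nat.le_add_left T N)).symm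
    linarith
  -- Pass to a.e. summability via lintegral
  have hlin : ∀ k, ∫⁻ ω, ENNReal.ofReal (φ (x k ω)) ∂μ = ENNReal.ofReal (a k) :=
    fun k => (ofReal_integral_eq_lintegral_ofReal (hφint k)
      (ae_of_all _ fun ω => hφnn _)).symm
  have htsum : ∫⁻ ω, ∑' k, ENNReal.ofReal (φ (x k ω)) ∂μ < ⊤ := by
    have hFm : ∀ k : ℕ, AEMeasurable (fun ω => ENNReal.ofReal (φ (x k ω))) μ :=
      fun k => ((hxm k).ennreal_ofReal).aemeasurable
    rw [lintegral_tsum hFm]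
    simp_rw [hlin]
    rw [← ENNReal.ofReal_tsum_of_nonneg hann hsum]
    exact ENNReal.ofReal_lt_top
  have hae : ∀ᵐ ω ∂μ, ∑' k, ENNReal.ofReal (φ (x k ω)) < ⊤ :=
    ae_lt_top (Measurable.ennreal_tsum fun k => (hxm k).ennreal_ofReal) htsum.ne
  filter_upwards [hae] with ω hω
  have hsummable : Summable fun k => φ (x k ω) := by
    have h := ENNReal.summable_toReal hω.ne
    refine h.congr fun k => ?_
    simp [ENNReal.toReal_ofReal (hφnn (x k ω))]
  exact hsummable.tendsto_atTop_zero
end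

section
/- Let V be continuous nonnegative on ℝ^n, Q_λ = {x : V(x) < λ} for λ > 0, and {x_k} adapted with: (a) E[V(x_{k+1}) | F_k] ≤ V(x_k) whenever x_k ∈ Q_λ; (b) there is an integer T ≥ 1 such that E[V(x_{k+T}) | F_k] − V(x_k) ≤ −φ(x_k) with φ continuous and φ ≥ 0 on Q_λ. Then for x_0 ∈ Q_λ deterministic, x_k converges to {x ∈ Q_λ : φ(x) = 0} with probability at least 1 − V(x_0)/λ. -/
open MeasureTheory Filter

theorem stmt_4 {Ω : Type*} {m0 : MeasurableSpace Ω} (μ : Measure Ω) [IsProbabilityMeasure μ]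
    (ℱ : Filtration ℕ m0) {n : ℕ} (x : ℕ → Ω → (Fin n → ℝ))
    (hAdapted : Adapted ℱ x)
    (V φ : (Fin n → ℝ) → ℝ)
    (hVcont : Continuous V) (hVnn : ∀ y, 0 ≤ V y)
    (hφcont : Continuous φ)
    (lam : ℝ) (hlam : 0 < lam)
    (hφnn : ∀ y, V y < lam → 0 ≤ φ y)
    (hint : ∀ k, Integrable (fun ω => V (x k ω)) μ)
    (ha : ∀ k, ∀ᵐ ω ∂μ, V (x k ω) < lam →
         (μ[fun ω' => V (x (k + 1) ω') | ℱ k]) ω ≤ V (x k ω))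
    (T : ℕ) (hT : 1 ≤ T)
    (hb : ∀ k, μ[fun ω => V (x (k + T) ω) | ℱ k]
        ≤ᵐ[μ] fun ω => V (x k ω) - φ (x k ω))
    (x0 : Fin n → ℝ) (hx0 : ∀ ω, x 0 ω = x0) (hx0Q : V x0 < lam) :
    ENNReal.ofReal (1 - V x0 / lam) ≤
      μ {ω | (∀ k, V (x k ω) < lam) ∧ Tendsto (fun k => φ (x k ω)) atTop (nhds 0)} := by
  classical
  -- the "still inside Q_λ up to time k" events
  set S : ℕ → Set Ω := fun k => {ω | ∀ j ≤ k, V (x j ω) < lam} with hSdef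
  have hxm : ∀ k j, j ≤ k → Measurable[ℱ k] (x j) := fun k j hjk =>
    ((hAdapted j).mono (ℱ.mono hjk) le_rfl)
  have hSmF : ∀ k, MeasurableSet[ℱ k] (S k) := by
    intro k
    have hEq : S k = ⋂ j ∈ Finset.Iic k, (fun ω => V (x j ω)) ⁻¹' Set.Iio lam := by
      ext ω; simp [hSdef]
    rw [hEq]
    exact Finset.measurableSet_biInter _ fun j hj =>
      (hVcont.measurable.comp (hxm k j (Finset.mem_Iic.mp hj))) measurableSet_Iio
  have hSm : ∀ k, MeasurableSet (S k) := fun k => ℱ.le k _ (hSmF k)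
  have hSanti : ∀ {j k : ℕ}, j ≤ k → S k ⊆ S j := by
    intro j k hjk ω hω i hij
    exact hω i (hij.trans hjk)
  have hmemS : ∀ k ω, ω ∈ S k → V (x k ω) < lam := fun k ω h => h k le_rfl
  have hS0 : S 0 = Set.univ := by
    ext ω
    simp only [hSdef, Set.mem_setOf_eq, Set.mem_univ, iff_true, Nat.le_zero]
    rintro j rfl
    rw [hx0 ω]; exact hx0Q
  have hSsucc : ∀ k, S (k + 1) = S k ∩ {ω | V (x (k + 1) ω) < lam} := by
    intro k; ext ω
    simp only [hSdef, Set.mem_setOf_eq, Set.mem_inter_iff]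
    constructor
    · intro h; exact ⟨fun j hj => h j (hj.trans (Nat.le_succ k)), h (k + 1) le_rfl⟩
    · rintro ⟨h1, h2⟩ j hj
      rcases Nat.le_succ_iff_eq_or_le.mp hj with rfl | hj'
      · exact h2
      · exact h1 j hj'
  -- the values b k
  set b : ℕ → ℝ := fun k => ∫ ω in S k, V (x k ω) ∂μ with hbdef
  have hb_nonneg : ∀ k, 0 ≤ b k := fun k =>
    setIntegral_nonneg (hSm k) fun ω _ => hVnn _
  have hb_le : ∀ k, b k ≤ lam := by
    intro k
    have h1 : b k ≤ ∫ _ω in S k, lam ∂μ :=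
      setIntegral_mono_on ((hint k).integrableOn)
        (integrableOn_const (measure_ne_top μ _)) (hSm k)
        fun ω hω => (hmemS k ω hω).le
    have h2 : ∫ _ω in S k, lam ∂μ = (μ (S k)).toReal * lam := by
      simp [setIntegral_const, smul_eq_mul, Measure.real]
    have h3 : (μ (S k)).toReal ≤ 1 := by
      have h := ENNReal.toReal_mono (by simp : (1 : ENNReal) ≠ ⊤)
        (prob_le_one (μ := μ) (s := S k))
      simpa using h
    have h0 : (0:ℝ) ≤ (μ (S k)).toReal := ENNReal.toReal_nonneg
    nlinarith
  -- step inequality from (a)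
  have key1 : ∀ k, ∫ ω in S k, V (x (k + 1) ω) ∂μ ≤ b k := by
    intro k
    have h1 : ∫ ω in S k, V (x (k + 1) ω) ∂μ
        = ∫ ω in S k, (μ[fun ω' => V (x (k + 1) ω') | ℱ k]) ω ∂μ :=
      (setIntegral_condExp (ℱ.le k) (hint (k + 1)) (hSmF k)).symm
    rw [h1]
    refine integral_mono_ae (integrable_condExp.integrableOn) ((hint k).integrableOn) ?_
    rw [Filter.EventuallyLE, ae_restrict_iff' (hSm k)]
    filter_upwards [ha k] with ω hω hmem
    exact hω (hmemS k ω hmem)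
  -- splitting off the exit part
  have key2 : ∀ k, b (k + 1) + lam * (μ (S k \ S (k + 1))).toReal
      ≤ ∫ ω in S k, V (x (k + 1) ω) ∂μ := by
    intro k
    have hsub : S (k + 1) ⊆ S k := hSanti (Nat.le_succ k)
    have hunion : S (k + 1) ∪ (S k \ S (k + 1)) = S k := Set.union_diff_cancel hsub
    have hdisj : Disjoint (S (k + 1)) (S k \ S (k + 1)) := Set.disjoint_sdiff_right
    have hmeas : MeasurableSet (S k \ S (k + 1)) := (hSm k).diff (hSm (k + 1))
    have hsplit := setIntegral_union (f := fun ω => V (x (k + 1) ω)) (μ := μ)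
      hdisj hmeas ((hint (k + 1)).integrableOn) ((hint (k + 1)).integrableOn)
    rw [hunion] at hsplit
    have hlower : lam * (μ (S k \ S (k + 1))).toReal
        ≤ ∫ ω in S k \ S (k + 1), V (x (k + 1) ω) ∂μ := by
      refine setIntegral_ge_of_const_le_real hmeas (measure_ne_top μ _) ?_
        ((hint (k + 1)).integrableOn)
      intro ω hω
      by_contra hc
      push_neg at hc
      exact hω.2 ((hSsucc k) ▸ ⟨hω.1, hc⟩)
    linarith [hsplit, hlower]
  -- maximal inequality by induction
  have hmax : ∀ k, lam * (μ (S k)ᶜ).toReal + b k ≤ V x0 := by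
    intro k
    induction k with
    | zero =>
      have h1 : (μ (S 0)ᶜ) = 0 := by rw [hS0]; simp
      have h2 : b 0 = V x0 := by
        rw [hbdef]
        simp only [hS0, Measure.restrict_univ]
        have : (fun ω => V (x 0 ω)) = fun _ω => V x0 := by
          funext ω; rw [hx0 ω]
        rw [this, integral_const]
        simp
      rw [h1, h2]; simp
    | succ k ih =>
      have hsub : S (k + 1) ⊆ S k := hSanti (Nat.le_succ k)
      have hcompl : (S (k + 1))ᶜ = (S k)ᶜ ∪ (S k \ S (k + 1)) := by
        ext ω
        simp only [Set.mem_compl_iff, Set.mem_union, Set.mem_diff]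
        constructor
        · intro h
          by_cases h1 : ω ∈ S k
          · exact Or.inr ⟨h1, h⟩
          · exact Or.inl h1
        · rintro (h | ⟨_, h⟩) hc
          · exact h (hsub hc)
          · exact h hc
      have hdisj : Disjoint ((S k)ᶜ) (S k \ S (k + 1)) :=
        Set.disjoint_of_subset_right Set.diff_subset disjoint_compl_left
      have hm : μ (S (k + 1))ᶜ = μ (S k)ᶜ + μ (S k \ S (k + 1)) := by
        rw [hcompl, measure_union hdisj ((hSm k).diff (hSm (k + 1)))]
      have htr : (μ (S (k + 1))ᶜ).toReal
          = (μ (S k)ᶜ).toReal + (μ (S k \ S (k + 1))).toReal := by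
        rw [hm, ENNReal.toReal_add (measure_ne_top μ _) (measure_ne_top μ _)]
      have := key1 k
      have := key2 k
      rw [htr]
      nlinarith
  -- the "stays forever in Q_λ" event
  set A : Set Ω := {ω | ∀ k, V (x k ω) < lam} with hAdef
  have hAeq : A = ⋂ k, S k := by
    ext ω
    simp only [hAdef, Set.mem_setOf_eq, Set.mem_iInter, hSdef]
    exact ⟨fun h k j _ => h j, fun h k => h k k le_rfl⟩
  have hAm : MeasurableSet A := hAeq ▸ MeasurableSet.iInter fun k => hSm k
  have hAcompl : μ Aᶜ ≤ ENNReal.ofReal (V x0 / lam) := by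
    have h1 : Aᶜ = ⋃ k, (S k)ᶜ := by rw [hAeq, Set.compl_iInter]
    have hmono : Monotone fun k => (S k)ᶜ := fun i j hij =>
      Set.compl_subset_compl.mpr (hSanti hij)
    have h2 : μ Aᶜ = ⨆ k, μ (S k)ᶜ := by
      rw [h1]
      exact hmono.measure_iUnion
    rw [h2]
    refine iSup_le fun k => ?_
    have h3 : (μ (S k)ᶜ).toReal ≤ V x0 / lam := by
      have h4 := hmax k
      have h5 := hb_nonneg k
      rw [le_div_iff₀ hlam]
      nlinarith
    calc μ (S k)ᶜ = ENNReal.ofReal ((μ (S k)ᶜ).toReal) := by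
          rw [ENNReal.ofReal_toReal (measure_ne_top μ _)]
      _ ≤ ENNReal.ofReal (V x0 / lam) := ENNReal.ofReal_le_ofReal h3
  have hμA : ENNReal.ofReal (1 - V x0 / lam) ≤ μ A := by
    have h1 : μ A = 1 - μ Aᶜ := by
      have h := prob_compl_eq_one_sub (μ := μ) hAm.compl
      rwa [compl_compl] at h
    rw [h1, ENNReal.ofReal_sub _ (div_nonneg (hVnn x0) hlam.le)]
    simp only [ENNReal.ofReal_one]
    exact tsub_le_tsub_left hAcompl 1
  -- integrability of φ ∘ x_k on S k
  have hφm : ∀ k, Measurable (fun ω => φ (x k ω)) := fun k =>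
    hφcont.measurable.comp ((hAdapted k).mono (ℱ.le k) le_rfl)
  have hφint : ∀ k, IntegrableOn (fun ω => φ (x k ω)) (S k) μ := by
    intro k
    have hg : Integrable (fun ω => V (x k ω)
        - (μ[fun ω' => V (x (k + T) ω') | ℱ k]) ω) μ :=
      (hint k).sub integrable_condExp
    refine Integrable.mono (hg.integrableOn) ((hφm k).aestronglyMeasurable.restrict) ?_
    rw [ae_restrict_iff' (hSm k)]
    filter_upwards [hb k] with ω hω hmem
    have h1 : 0 ≤ φ (x k ω) := hφnn _ (hmemS k ω hmem)
    have h2 : φ (x k ω) ≤ V (x k ω) - (μ[fun ω' => V (x (k + T) ω') | ℱ k]) ω := by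
      have := hω
      linarith
    simp only [Real.norm_eq_abs]
    rw [abs_of_nonneg h1]
    exact h2.trans (le_abs_self _)
  -- key drift inequality from (b)
  set c : ℕ → ℝ := fun k => ∫ ω in S k, φ (x k ω) ∂μ with hcdef
  have hc_nonneg : ∀ k, 0 ≤ c k := fun k =>
    setIntegral_nonneg (hSm k) fun ω hω => hφnn _ (hmemS k ω hω)
  have key3 : ∀ k, c k ≤ b k - b (k + T) := by
    intro k
    have h1 : ∫ ω in S k, V (x (k + T) ω) ∂μ
        = ∫ ω in S k, (μ[fun ω' => V (x (k + T) ω') | ℱ k]) ω ∂μ :=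
      (setIntegral_condExp (ℱ.le k) (hint (k + T)) (hSmF k)).symm
    have h2 : ∫ ω in S k, (μ[fun ω' => V (x (k + T) ω') | ℱ k]) ω ∂μ
        ≤ ∫ ω in S k, (V (x k ω) - φ (x k ω)) ∂μ := by
      refine integral_mono_ae (integrable_condExp.integrableOn) ?_ ?_
      · exact ((hint k).integrableOn).sub (hφint k)
      · exact ae_restrict_of_ae (hb k)
    have h3 : ∫ ω in S k, (V (x k ω) - φ (x k ω)) ∂μ = b k - c k :=
      integral_sub ((hint k).integrableOn) (hφint k)
    have h4 : b (k + T) ≤ ∫ ω in S k, V (x (k + T) ω) ∂μ := by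
      refine setIntegral_mono_set ((hint (k + T)).integrableOn) ?_ ?_
      · exact Filter.Eventually.of_forall fun ω => hVnn _
      · exact HasSubset.Subset.eventuallyLE (hSanti (Nat.le_add_right k T))
    linarith
  -- partial sums of c are uniformly bounded
  have hpartial : ∀ K, ∑ k ∈ Finset.range K, c k ≤ T * lam := by
    intro K
    have h1 : ∑ k ∈ Finset.range K, c k
        ≤ ∑ k ∈ Finset.range K, (b k - b (k + T)) :=
      Finset.sum_le_sum fun k _ => key3 k
    have h2 : ∑ k ∈ Finset.range K, (b k - b (k + T))
        = (∑ k ∈ Finset.range K, b k) - ∑ k ∈ Finset.range K, b (k + T) :=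
      Finset.sum_sub_distrib _ _
    have h2a : ∑ k ∈ Finset.range K, b (k + T) = ∑ k ∈ Finset.Ico T (T + K), b k := by
      rw [Finset.sum_Ico_eq_sum_range]
      simp only [Nat.add_sub_cancel_left]
      exact (Finset.sum_congr rfl fun k _ => by rw [Nat.add_comm]).symm
    have hdisjF : Disjoint (Finset.range T) (Finset.Ico T (T + K)) := by
      refine Finset.disjoint_left.mpr fun i hi hi' => ?_
      simp only [Finset.mem_range, Finset.mem_Ico] at hi hi'
      omega
    have h3 : ∑ k ∈ Finset.range K, b k
        ≤ (∑ k ∈ Finset.range T, b k) + ∑ k ∈ Finset.Ico T (T + K), b k := by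
      have hsubset : Finset.range K ⊆ Finset.range T ∪ Finset.Ico T (T + K) := by
        intro i hi
        simp only [Finset.mem_range, Finset.mem_union, Finset.mem_Ico] at hi ⊢
        omega
      calc ∑ k ∈ Finset.range K, b k
          ≤ ∑ k ∈ Finset.range T ∪ Finset.Ico T (T + K), b k :=
            Finset.sum_le_sum_of_subset_of_nonneg hsubset fun i _ _ => hb_nonneg i
        _ = (∑ k ∈ Finset.range T, b k) + ∑ k ∈ Finset.Ico T (T + K), b k :=
            Finset.sum_union hdisjF
    have h4 : ∑ k ∈ Finset.range T, b k ≤ T * lam := by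
      calc ∑ k ∈ Finset.range T, b k ≤ ∑ _k ∈ Finset.range T, lam :=
            Finset.sum_le_sum fun k _ => hb_le k
        _ = T * lam := by simp [mul_comm]
    linarith
  -- summability of the indicator sums, a.e.
  set f : ℕ → Ω → ℝ := fun k => (S k).indicator (fun ω => φ (x k ω)) with hfdef
  have hf_nonneg : ∀ k ω, 0 ≤ f k ω := by
    intro k ω
    by_cases h : ω ∈ S k
    · simp only [hfdef, Set.indicator_of_mem h]
      exact hφnn _ (hmemS k ω h)
    · simp [hfdef, Set.indicator_of_notMem h]
  have hf_meas : ∀ k, Measurable (f k) := fun k => ((hφm k).indicator (hSm k))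
  have hf_int : ∀ k, Integrable (f k) μ := fun k =>
    ((hφint k).integrable_indicator (hSm k))
  have hf_lint : ∀ k, ∫⁻ ω, ENNReal.ofReal (f k ω) ∂μ = ENNReal.ofReal (c k) := by
    intro k
    rw [← ofReal_integral_eq_lintegral_ofReal (hf_int k)
      (Filter.Eventually.of_forall fun ω => hf_nonneg k ω)]
    congr 1
    rw [hcdef]
    exact integral_indicator (hSm k)
  have htsum : ∑' k, ∫⁻ ω, ENNReal.ofReal (f k ω) ∂μ ≤ ENNReal.ofReal (T * lam) := by
    refine ENNReal.tsum_le_of_sum_range_le fun K => ?_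
    calc ∑ k ∈ Finset.range K, ∫⁻ ω, ENNReal.ofReal (f k ω) ∂μ
        = ∑ k ∈ Finset.range K, ENNReal.ofReal (c k) := by
          exact Finset.sum_congr rfl fun k _ => hf_lint k
      _ = ENNReal.ofReal (∑ k ∈ Finset.range K, c k) :=
          (ENNReal.ofReal_sum_of_nonneg fun k _ => hc_nonneg k).symm
      _ ≤ ENNReal.ofReal (T * lam) := ENNReal.ofReal_le_ofReal (hpartial K)
  have hlint : ∫⁻ ω, (∑' k, ENNReal.ofReal (f k ω)) ∂μ < ⊤ := by
    rw [lintegral_tsum fun k => ((hf_meas k).ennreal_ofReal).aemeasurable]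
    exact lt_of_le_of_lt htsum ENNReal.ofReal_lt_top
  have hae_fin : ∀ᵐ ω ∂μ, (∑' k, ENNReal.ofReal (f k ω)) < ⊤ :=
    ae_lt_top (Measurable.ennreal_tsum fun k => (hf_meas k).ennreal_ofReal) hlint.ne
  -- conclusion: a.e. on A, φ (x k ω) → 0
  have hae : ∀ᵐ ω ∂μ, ω ∈ A → ω ∈ {ω | (∀ k, V (x k ω) < lam) ∧
      Tendsto (fun k => φ (x k ω)) atTop (nhds 0)} := by
    filter_upwards [hae_fin] with ω hω hmem
    have hmem' : ∀ k, V (x k ω) < lam := hmem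
    refine ⟨hmem', ?_⟩
    have hωS : ∀ k, ω ∈ S k := fun k j _ => hmem' j
    have h1 : Summable fun k => (ENNReal.ofReal (f k ω)).toReal :=
      ENNReal.summable_toReal hω.ne
    have h2 : (fun k => (ENNReal.ofReal (f k ω)).toReal) = fun k => φ (x k ω) := by
      funext k
      rw [ENNReal.toReal_ofReal (hf_nonneg k ω)]
      simp [hfdef, Set.indicator_of_mem (hωS k)]
    rw [h2] at h1
    exact h1.tendsto_atTop_zero
  calc ENNReal.ofReal (1 - V x0 / lam) ≤ μ A := hμA
    _ ≤ μ {ω | (∀ k, V (x k ω) < lam) ∧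
        Tendsto (fun k => φ (x k ω)) atTop (nhds 0)} := by
      refine measure_mono_ae ?_
      filter_upwards [hae] with ω h hωA
      exact h hωA
end
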